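/- arXiv:1807.01180 — 3 statements merged into one kernel-verified Lean document; each statement's English description precedes it below -/
import Mathlib

section
/- Let T be a tree on n ≥ 2 vertices and let r ≥ 3 be an integer. Then for every real number y, φ(T^r, y²) = y^{(n−2)(r−2)} · μ(T, y^r), where φ(T^r, ·) is the matching polynomial of the r-uniform hypergraph T^r and μ(T, ·) is the matching polynomial of the graph T. -/
open Classical

noncomputable section

/-- A finite hypergraph: a finite vertex set together with a finite set of edges,
each edge being a finite set of vertices. -/
structure FinHypergraph (α : Type*) where
  verts : Finset α
  edges : Finset (Finset α)

namespace FinHypergraph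

variable {α : Type*}

/-- Every edge of `H` is a subset of the vertex set of `H`. -/
def WellFormed (H : FinHypergraph α) : Prop := ∀ e ∈ H.edges, e ⊆ H.verts

/-- `H` is `r`-uniform: every edge has exactly `r` vertices. -/
def Uniform (H : FinHypergraph α) (r : ℕ) : Prop := ∀ e ∈ H.edges, e.card = r

/-- A set of edges is a matching if its members are pairwise disjoint. -/
def IsMatchingSet (M : Finset (Finset α)) : Prop :=
  ∀ e ∈ M, ∀ f ∈ M, e ≠ f → Disjoint e f

/-- `m(H,k)`: the number of matchings of `H` consisting of exactly `k` edges. -/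
noncomputable def matchCount (H : FinHypergraph α) (k : ℕ) : ℕ :=
  (H.edges.powerset.filter (fun M => M.card = k ∧ IsMatchingSet M)).card

/-- The matching polynomial `φ(H,x) = Σ_k (-1)^k m(H,k) x^(n - r·k)` of an
`r`-uniform hypergraph `H` with `n` vertices, evaluated at a real number `x`. -/
noncomputable def matchPoly (H : FinHypergraph α) (r : ℕ) (x : ℝ) : ℝ :=
  ∑ k ∈ Finset.range (H.verts.card + 1),
    (-1 : ℝ) ^ k * (H.matchCount k : ℝ) * x ^ (H.verts.card - r * k)

/-- `H − S`: delete the vertices of `S` and all edges meeting `S`. -/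
def removeVerts (H : FinHypergraph α) (S : Finset α) : FinHypergraph α :=
  ⟨H.verts \ S, H.edges.filter (fun e => Disjoint e S)⟩

end FinHypergraph

/-- `m(G,k)` for a simple graph `G`: the number of sets of `k` pairwise disjoint edges. -/
noncomputable def graphMatchCount {V : Type*} [Fintype V] (G : SimpleGraph V) (k : ℕ) : ℕ :=
  ((Set.toFinite G.edgeSet).toFinset.powerset.filter
    (fun M => M.card = k ∧ ∀ e ∈ M, ∀ f ∈ M, e ≠ f →
      Disjoint (Finset.univ.filter (· ∈ e)) (Finset.univ.filter (· ∈ f)))).card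

/-- The matching polynomial `μ(G,x) = Σ_k (-1)^k m(G,k) x^(n-2k)` of a simple graph `G`
on `n` vertices. -/
noncomputable def graphMatchPoly {V : Type*} [Fintype V] (G : SimpleGraph V) (x : ℝ) : ℝ :=
  ∑ k ∈ Finset.range (Fintype.card V + 1),
    (-1 : ℝ) ^ k * (graphMatchCount G k : ℝ) * x ^ (Fintype.card V - 2 * k)

/-- The `r`-th power hypergraph `G^r` of a simple graph `G`: each edge `e` of `G` is
enlarged by `r - 2` new vertices (distinct for distinct edges) to an `r`-element edge. -/
noncomputable def powerHypergraph {V : Type*} [Fintype V] (G : SimpleGraph V) (r : ℕ) :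
    FinHypergraph (V ⊕ (Sym2 V × Fin (r - 2))) :=
  ⟨(Finset.univ.image Sum.inl) ∪
      (((Set.toFinite G.edgeSet).toFinset ×ˢ (Finset.univ : Finset (Fin (r - 2)))).image
        Sum.inr),
    (Set.toFinite G.edgeSet).toFinset.image (fun e =>
      ((Finset.univ.filter (· ∈ e)).image Sum.inl) ∪
        (Finset.univ.image (fun i : Fin (r - 2) => Sum.inr (e, i))))⟩

/-!
Enlarging the edges of `G` by pairwise distinct new vertices does not change which edge sets are
matchings, so `m(G^r, k) = m(G, k)` for all `k`. Since `G^r` has `n + |E|(r - 2)` vertices, the two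
matching polynomials then agree term by term up to the factor `y^((r-2)(2|E| - n))`; for a tree
`|E| = n - 1`, so `2|E| - n = n - 2`.
-/

open Finset

namespace FinHypergraph

variable {α β : Type*} [DecidableEq α]

lemma isMatchingSet_image_iff {g : β → Finset α} (hg : Function.Injective g) {M : Finset β} :
    IsMatchingSet (M.image g) ↔ ∀ e ∈ M, ∀ f ∈ M, e ≠ f → Disjoint (g e) (g f) := by
  simp only [IsMatchingSet, forall_mem_image, hg.ne_iff]

lemma matchCount_eq_of_edges_eq_image {H : FinHypergraph α} {E : Finset β} {g : β → Finset α}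
    (hg : Function.Injective g) (hH : H.edges = E.image g) (k : ℕ) :
    H.matchCount k = #{M ∈ E.powerset |
      #M = k ∧ ∀ e ∈ M, ∀ f ∈ M, e ≠ f → Disjoint (g e) (g f)} := by
  rw [matchCount, hH, powerset_image, filter_image, card_image_of_injective _ (image_injective hg)]
  congr 1
  ext M
  simp only [mem_filter, card_image_of_injective _ hg, isMatchingSet_image_iff hg]

end FinHypergraph

section PowerHypergraph

variable {V : Type*} [Fintype V]

def powerEdge (r : ℕ) (e : Sym2 V) : Finset (V ⊕ (Sym2 V × Fin (r - 2))) :=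
  ((univ.filter (· ∈ e)).image Sum.inl) ∪ (univ.image fun i : Fin (r - 2) => Sum.inr (e, i))

lemma powerHypergraph_edges (G : SimpleGraph V) (r : ℕ) :
    (powerHypergraph G r).edges = (Set.toFinite G.edgeSet).toFinset.image (powerEdge r) :=
  rfl

@[simp]
lemma inl_mem_powerEdge {r : ℕ} {e : Sym2 V} {v : V} :
    Sum.inl v ∈ powerEdge r e ↔ v ∈ e := by
  simp [powerEdge]

@[simp]
lemma inr_mem_powerEdge {r : ℕ} {e f : Sym2 V} {i : Fin (r - 2)} :
    Sum.inr (f, i) ∈ powerEdge r e ↔ f = e := by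
  simp [powerEdge, eq_comm]

lemma powerEdge_injective {r : ℕ} (hr : 3 ≤ r) : Function.Injective (powerEdge (V := V) r) := by
  intro e f h
  have hmem : Sum.inr (e, ⟨0, by omega⟩) ∈ powerEdge r f := h ▸ inr_mem_powerEdge.2 rfl
  exact inr_mem_powerEdge.1 hmem

lemma disjoint_powerEdge_iff {r : ℕ} {e f : Sym2 V} (hef : e ≠ f) :
    Disjoint (powerEdge r e) (powerEdge r f) ↔
      Disjoint (univ.filter (· ∈ e)) (univ.filter (· ∈ f)) := by
  simp [disjoint_left, Sum.forall, hef]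

theorem matchCount_powerHypergraph (G : SimpleGraph V) {r : ℕ} (hr : 3 ≤ r) (k : ℕ) :
    (powerHypergraph G r).matchCount k = graphMatchCount G k := by
  rw [FinHypergraph.matchCount_eq_of_edges_eq_image (powerEdge_injective hr)
    (powerHypergraph_edges G r), graphMatchCount]
  congr 1
  ext M
  simp only [mem_filter]
  exact and_congr_right' (and_congr_right' (forall₂_congr fun e _ => forall₂_congr fun f _ =>
    forall_congr' disjoint_powerEdge_iff))

theorem card_verts_powerHypergraph (G : SimpleGraph V) (r : ℕ) :
    #(powerHypergraph G r).verts = Fintype.card V + G.edgeSet.ncard * (r - 2) := by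
  rw [powerHypergraph, card_union_of_disjoint, card_image_of_injective _ Sum.inl_injective,
    card_image_of_injective _ Sum.inr_injective, card_product, card_univ, card_univ,
    Fintype.card_fin, Set.ncard_eq_toFinset_card _ (Set.toFinite _)]
  simp [disjoint_left]

lemma card_filter_mem_of_mem_edgeSet {G : SimpleGraph V} {e : Sym2 V} (he : e ∈ G.edgeSet) :
    #(univ.filter (· ∈ e)) = 2 := by
  have : univ.filter (· ∈ e) = e.toFinset := by ext; simp [Sym2.mem_toFinset]
  rw [this, Sym2.card_toFinset_of_not_isDiag _ (G.not_isDiag_of_mem_edgeSet he)]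

/-- A matching with `k` edges covers `2k` vertices. -/
theorem graphMatchCount_eq_zero_of_card_lt (G : SimpleGraph V) {k : ℕ}
    (hk : Fintype.card V < 2 * k) : graphMatchCount G k = 0 := by
  rw [graphMatchCount, card_eq_zero, filter_eq_empty_iff]
  rintro M hMsub ⟨rfl, hdisj⟩
  have hM : ∀ e ∈ M, e ∈ G.edgeSet := fun e he =>
    (Set.Finite.mem_toFinset _).1 (mem_powerset.1 hMsub he)
  have hcover : 2 * #M ≤ Fintype.card V :=
    calc 2 * #M = ∑ e ∈ M, #(univ.filter (· ∈ e)) := by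
          rw [sum_congr rfl fun e he => card_filter_mem_of_mem_edgeSet (hM e he), sum_const,
            smul_eq_mul, mul_comm]
      _ = #(M.biUnion fun e => univ.filter (· ∈ e)) := (card_biUnion hdisj).symm
      _ ≤ Fintype.card V := card_le_univ _
  omega

lemma sq_pow_eq_pow_mul_pow {M : Type*} [Monoid M] (y : M) {n m r k : ℕ} (hr : 2 ≤ r)
    (hk : 2 * k ≤ n) (hn : n ≤ 2 * m) :
    (y ^ 2) ^ (n + m * (r - 2) - r * k) = y ^ ((r - 2) * (2 * m - n)) * (y ^ r) ^ (n - 2 * k) := by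
  rw [← pow_mul, ← pow_mul, ← pow_add]
  congr 1
  obtain ⟨s, rfl⟩ : ∃ s, r = s + 2 := ⟨r - 2, by omega⟩
  simp only [Nat.add_sub_cancel]
  have hrk : (s + 2) * k ≤ n + m * s := by nlinarith
  zify [hk, hn, hrk]
  ring

theorem matchPoly_powerHypergraph (G : SimpleGraph V) {r : ℕ} (hr : 3 ≤ r)
    (hE : Fintype.card V ≤ 2 * G.edgeSet.ncard) (y : ℝ) :
    (powerHypergraph G r).matchPoly r (y ^ 2)
      = y ^ ((r - 2) * (2 * G.edgeSet.ncard - Fintype.card V)) * graphMatchPoly G (y ^ r) := by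
  rw [FinHypergraph.matchPoly, graphMatchPoly, card_verts_powerHypergraph, mul_sum,
    sum_subset (range_subset_range.2
    (by omega : Fintype.card V + 1 ≤ Fintype.card V + G.edgeSet.ncard * (r - 2) + 1))]
  · refine sum_congr rfl fun k _ => ?_
    rw [matchCount_powerHypergraph G hr]
    by_cases hk : 2 * k ≤ Fintype.card V
    · rw [sq_pow_eq_pow_mul_pow y (by omega) hk hE]
      ring
    · simp [graphMatchCount_eq_zero_of_card_lt G (not_le.1 hk)]
  · intro k _ hk
    rw [mem_range] at hk
    simp [graphMatchCount_eq_zero_of_card_lt G (by omega : Fintype.card V < 2 * k)]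

end PowerHypergraph

theorem powerHypergraph_matchPoly_general {V : Type*} [Fintype V]
    (G : SimpleGraph V) (hG : G.IsTree) (hn : 2 ≤ Fintype.card V) (r : ℕ) (hr : 3 ≤ r) :
    ∀ y : ℝ, (powerHypergraph G r).matchPoly r (y ^ 2)
      = y ^ ((Fintype.card V - 2) * (r - 2)) * graphMatchPoly G (y ^ r) := by
  have hE : G.edgeSet.ncard + 1 = Fintype.card V := by
    rw [← G.coe_edgeFinset, Set.ncard_coe_finset]
    exact hG.card_edgeFinset
  intro y
  rw [matchPoly_powerHypergraph G hr (by omega), mul_comm (Fintype.card V - 2)]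
  congr 3
  omega

/-- For a tree `T` on `n ≥ 2` vertices and `r ≥ 3`,
`φ(T^r, y²) = y^((n−2)(r−2)) · μ(T, y^r)` for every real `y`. -/
theorem powerHypergraph_matchPoly {V : Type*} [Fintype V] [DecidableEq V]
    (G : SimpleGraph V) (hG : G.IsTree) (hn : 2 ≤ Fintype.card V) (r : ℕ) (hr : 3 ≤ r) :
    ∀ y : ℝ, (powerHypergraph G r).matchPoly r (y ^ 2)
      = y ^ ((Fintype.card V - 2) * (r - 2)) * graphMatchPoly G (y ^ r) :=
  powerHypergraph_matchPoly_general G hG hn r hr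
end
end

section
/- Let r ≥ 2 and m ≥ 2. The matching polynomials of r-uniform loose paths satisfy the three-term recurrence φ(P_m^r, x) = x^{r−1}·φ(P_{m−1}^r, x) − x^{r−2}·φ(P_{m−2}^r, x), where φ(P_0^r, x) = x and φ(P_1^r, x) = x^r − 1. -/
open Classical

noncomputable section

namespace FinHypergraph

variable {α : Type*}

/-- The edges of the `r`-uniform loose path of length `p` along the vertex labelling `w`:
the `i`-th edge consists of the `r` vertices `w (i*(r-1)), …, w ((i+1)*(r-1))`, so that
consecutive edges share exactly one vertex. -/
def loosePathEdges (r p : ℕ) (w : ℕ → α) : Finset (Finset α) :=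
  (Finset.range p).image (fun i => (Finset.Icc (i * (r - 1)) ((i + 1) * (r - 1))).image w)

/-- `P` is an `r`-uniform loose path with `m` edges (`P_m^r`); for `m = 0` it is a single
vertex with no edge. -/
def IsLoosePath (r m : ℕ) (P : FinHypergraph α) : Prop :=
  ∃ w : ℕ → α, Set.InjOn w (Set.Iic (m * (r - 1))) ∧
    P.verts = (Finset.Icc 0 (m * (r - 1))).image w ∧
    P.edges = loosePathEdges r m w

end FinHypergraph

open FinHypergraph

open Finset

/-!
A set of edges of a loose path is a matching exactly when no two of its edge indices are
consecutive, so `φ(P_p^r, x)` is a signed sum over the subsets of `{0, …, p-1}` without two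
consecutive elements, a subset `A` contributing `x ^ (p*(r-1) + 1 - r*#A)`. Splitting the
subsets of `{0, …, p+1}` by whether they contain `p+1` (which forces `p ∉ A`) gives the
recurrence, with the factors `x^(r-1)` and `x^(r-2)` accounting for the `r-1` vertices that
each further edge adds.
-/

namespace FinHypergraph

variable {α : Type*}

theorem matchPoly_eq_sum_matchings (H : FinHypergraph α) (r : ℕ) (h : #H.edges ≤ #H.verts)
    (x : ℝ) :
    H.matchPoly r x =
      ∑ M ∈ H.edges.powerset with IsMatchingSet M, (-1) ^ #M * x ^ (#H.verts - r * #M) := by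
  have hmaps : ∀ M ∈ H.edges.powerset.filter IsMatchingSet, #M ∈ range (#H.verts + 1) :=
    fun M hM => mem_range_succ_iff.mpr
      ((card_le_card (mem_powerset.mp (mem_filter.mp hM).1)).trans h)
  rw [matchPoly, ← sum_fiberwise_of_maps_to' hmaps fun k => (-1) ^ k * x ^ (#H.verts - r * k)]
  refine sum_congr rfl fun k _ => ?_
  rw [sum_const, nsmul_eq_mul, filter_filter, matchCount]
  simp_rw [and_comm]
  ring

theorem sum_matchings_image {ι β : Type*} [AddCommMonoid β] (S : Finset ι) (E : ι → Finset α)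
    (hE : Set.InjOn E S) (f : ℕ → β) :
    ∑ N ∈ (S.image E).powerset with IsMatchingSet N, f #N =
      ∑ A ∈ S.powerset.filter (fun A : Finset ι => (A : Set ι).PairwiseDisjoint E), f #A := by
  have hsub : ∀ A ∈ S.powerset, Set.InjOn E A := fun A hA => hE.mono (by simpa using hA)
  rw [powerset_image, filter_image, sum_image]
  · refine sum_congr ?_ fun A hA => by rw [card_image_of_injOn (hsub A (filter_subset _ _ hA))]
    refine filter_congr fun A hA => ?_
    have h := (hsub A hA).pairwiseDisjoint_image (f := id)
    rwa [← coe_image] at h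
  · intro A hA B hB hAB
    exact (image_eq_image_iff_of_injOn hE (by simpa using filter_subset _ _ hA)
      (by simpa using filter_subset _ _ hB)).mp hAB

end FinHypergraph

theorem Finset.disjoint_image_iff_of_injOn {β γ : Type*} [DecidableEq β] [DecidableEq γ]
    {f : β → γ} {s t : Finset β} (hf : Set.InjOn f ↑(s ∪ t)) :
    Disjoint (s.image f) (t.image f) ↔ Disjoint s t := by
  rw [disjoint_iff_inter_eq_empty, disjoint_iff_inter_eq_empty,
    ← image_inter_of_injOn _ _ (by simpa using hf), image_eq_empty]

theorem Nat.Icc_mul_injective {s : ℕ} (hs : 0 < s) :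
    Function.Injective fun i => Icc (i * s) ((i + 1) * s) := by
  intro i j h
  have hle : ∀ {i j}, Icc (i * s) ((i + 1) * s) = Icc (j * s) ((j + 1) * s) → j * s ≤ i * s :=
    fun h => (mem_Icc.mp (h ▸ left_mem_Icc.mpr (by nlinarith))).1
  exact Nat.eq_of_mul_eq_mul_right hs (le_antisymm (hle h.symm) (hle h))

theorem Nat.disjoint_Icc_mul_iff {s : ℕ} (hs : 0 < s) (i j : ℕ) :
    Disjoint (Icc (i * s) ((i + 1) * s)) (Icc (j * s) ((j + 1) * s)) ↔ i + 1 < j ∨ j + 1 < i := by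
  simp only [disjoint_left, mem_Icc, not_and, not_le]
  constructor
  · intro h
    by_contra! hij
    have := h (a := max i j * s) ⟨Nat.mul_le_mul_right s (le_max_left i j),
      Nat.mul_le_mul_right s (by omega)⟩ (Nat.mul_le_mul_right s (le_max_right i j))
    have : max i j ≤ j + 1 := by omega
    nlinarith
  · rintro (hij | hij) a ⟨ha1, ha2⟩ ha3 <;> nlinarith

def NoConsecutive (A : Finset ℕ) : Prop := ∀ i ∈ A, i + 1 ∉ A

theorem noConsecutive_iff_forall {A : Finset ℕ} :
    NoConsecutive A ↔ ∀ i ∈ A, ∀ j ∈ A, i ≠ j → i + 1 < j ∨ j + 1 < i := by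
  refine ⟨fun h i hi j hj hij => ?_, fun h i hi hi' => by have := h i hi _ hi' (by omega); omega⟩
  have h1 : j ≠ i + 1 := by rintro rfl; exact h i hi hj
  have h2 : i ≠ j + 1 := by rintro rfl; exact h j hj hi
  omega

namespace NoConsecutive

variable {A : Finset ℕ} {p : ℕ}

theorem two_mul_card_le (hA : NoConsecutive A) (hp : A ⊆ range p) : 2 * #A ≤ p + 1 := by
  have hdisj : Disjoint A (A.map (addRightEmbedding 1)) := by
    simp only [disjoint_left, mem_map, addRightEmbedding_apply, not_exists, not_and]
    rintro _ hi i hi' rfl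
    exact hA i hi' hi
  have hsub : A ∪ A.map (addRightEmbedding 1) ⊆ range (p + 1) := by
    intro i hi
    simp only [mem_union, mem_map, addRightEmbedding_apply] at hi
    rcases hi with hi | ⟨j, hj, rfl⟩
    · exact mem_range.mpr (by have := mem_range.mp (hp hi); omega)
    · exact mem_range.mpr (by have := mem_range.mp (hp hj); omega)
  simpa [card_union_of_disjoint hdisj, two_mul] using card_le_card hsub

theorem mul_card_le {r : ℕ} (hr : 2 ≤ r) (hA : NoConsecutive A) (hp : A ⊆ range p) :
    r * #A ≤ p * (r - 1) + 1 := by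
  have h := hA.two_mul_card_le hp
  obtain ⟨s, rfl⟩ : ∃ s, r = s + 2 := ⟨r - 2, by omega⟩
  rcases Nat.eq_zero_or_pos #A with h0 | h0
  · simp [h0]
  · rw [show s + 2 - 1 = s + 1 by omega]
    nlinarith

end NoConsecutive

theorem noConsecutive_insert_add_one_iff {A : Finset ℕ} {p : ℕ} (hp : A ⊆ range p) :
    NoConsecutive (insert (p + 1) A) ↔ NoConsecutive A := by
  have hlt : ∀ i ∈ A, i < p := fun i hi => mem_range.mp (hp hi)
  simp only [NoConsecutive, mem_insert, forall_eq_or_imp]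
  constructor
  · rintro ⟨-, h⟩ i hi hi'
    exact h i hi (Or.inr hi')
  · intro h
    refine ⟨?_, fun i hi => ?_⟩
    · rintro (h' | h')
      · omega
      · exact absurd (hlt _ h') (by omega)
    · rintro (h' | h')
      · exact absurd (hlt _ hi) (by omega)
      · exact h i hi h'

theorem not_noConsecutive_insert_add_one_insert (A : Finset ℕ) (p : ℕ) :
    ¬ NoConsecutive (insert (p + 1) (insert p A)) :=
  fun h => h p (by simp) (by simp)

noncomputable def loosePathPoly (r p : ℕ) (x : ℝ) : ℝ :=
  ∑ A ∈ (range p).powerset with NoConsecutive A, (-1) ^ #A * x ^ (p * (r - 1) + 1 - r * #A)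

theorem loosePathPoly_zero (r : ℕ) (x : ℝ) : loosePathPoly r 0 x = x := by
  rw [loosePathPoly, filter_true_of_mem (by simp [NoConsecutive])]
  simp

theorem loosePathPoly_one {r : ℕ} (hr : 1 ≤ r) (x : ℝ) : loosePathPoly r 1 x = x ^ r - 1 := by
  rw [loosePathPoly, filter_true_of_mem (by simp [NoConsecutive]), range_one, ← insert_empty,
    sum_powerset_insert (notMem_empty 0)]
  simp [Nat.sub_add_cancel hr, sub_eq_add_neg]

theorem loosePathPoly_add_two_eq_sum (r p : ℕ) (x : ℝ) :
    loosePathPoly r (p + 2) x =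
      ∑ A ∈ (range (p + 1)).powerset with NoConsecutive A,
          (-1) ^ #A * x ^ ((p + 2) * (r - 1) + 1 - r * #A) +
        ∑ A ∈ (range p).powerset with NoConsecutive A,
          (-1) ^ (#A + 1) * x ^ ((p + 2) * (r - 1) + 1 - r * (#A + 1)) := by
  simp only [loosePathPoly, sum_filter]
  rw [range_add_one, sum_powerset_insert notMem_range_self]
  congr 1
  rw [range_add_one, sum_powerset_insert notMem_range_self,
    sum_eq_zero fun A _ => if_neg (not_noConsecutive_insert_add_one_insert A p), add_zero]
  refine sum_congr rfl fun A hA => ?_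
  have hp : A ⊆ range p := mem_powerset.mp hA
  have hnotMem : p + 1 ∉ A := fun h => by simpa using hp h
  rw [card_insert_of_notMem hnotMem, noConsecutive_insert_add_one_iff hp]

theorem loosePathPoly_add_two {r : ℕ} (hr : 2 ≤ r) (p : ℕ) (x : ℝ) :
    loosePathPoly r (p + 2) x =
      x ^ (r - 1) * loosePathPoly r (p + 1) x - x ^ (r - 2) * loosePathPoly r p x := by
  -- `mul_card_le` guarantees that none of the truncated exponents below is cut off at `0`.
  have hk : ∀ q, ∀ A ∈ (range q).powerset.filter NoConsecutive, r * #A ≤ q * (r - 1) + 1 :=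
    fun q A hA => (mem_filter.mp hA).2.mul_card_le hr (mem_powerset.mp (mem_filter.mp hA).1)
  rw [loosePathPoly_add_two_eq_sum, loosePathPoly, loosePathPoly, mul_sum, mul_sum,
    sub_eq_add_neg, ← sum_neg_distrib]
  congr 1
  · refine sum_congr rfl fun A hA => ?_
    have := hk _ A hA
    have h2 : (p + 2) * (r - 1) = (p + 1) * (r - 1) + (r - 1) := by ring
    rw [show (p + 2) * (r - 1) + 1 - r * #A = (r - 1) + ((p + 1) * (r - 1) + 1 - r * #A) by
      omega, pow_add]
    ring
  · refine sum_congr rfl fun A hA => ?_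
    have := hk _ A hA
    have h2 : (p + 2) * (r - 1) = p * (r - 1) + 2 * (r - 1) := by ring
    rw [show (p + 2) * (r - 1) + 1 - r * (#A + 1) = (r - 2) + (p * (r - 1) + 1 - r * #A) by
      rw [mul_add_one]; omega, pow_add]
    ring

namespace FinHypergraph.IsLoosePath

variable {α : Type*} {r p : ℕ} {P : FinHypergraph α}

theorem card_verts (hP : IsLoosePath r p P) : #P.verts = p * (r - 1) + 1 := by
  obtain ⟨w, hw, hverts, -⟩ := hP
  rw [hverts, card_image_of_injOn (hw.mono fun a ha => (mem_Icc.mp ha).2), Nat.card_Icc]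
  rfl

theorem matchPoly_eq (hr : 2 ≤ r) (hP : IsLoosePath r p P) (x : ℝ) :
    P.matchPoly r x = loosePathPoly r p x := by
  have hn := hP.card_verts
  obtain ⟨w, hw, -, hedges⟩ := hP
  have hs : 0 < r - 1 := by omega
  set I : ℕ → Finset ℕ := fun i => Icc (i * (r - 1)) ((i + 1) * (r - 1))
  replace hedges : P.edges = (range p).image fun i => (I i).image w := hedges
  have hwI : ∀ {i j}, i ∈ range p → j ∈ range p → Set.InjOn w ↑(I i ∪ I j) := by
    intro i j hi hj
    refine hw.mono fun a ha => ?_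
    simp only [coe_union, Set.mem_union, mem_coe, I, mem_Icc] at ha
    have := mem_range.mp hi
    have := mem_range.mp hj
    rw [Set.mem_Iic]
    rcases ha with ⟨-, ha⟩ | ⟨-, ha⟩ <;> nlinarith
  have hdisj : ∀ {i j}, i ∈ range p → j ∈ range p →
      (Disjoint ((I i).image w) ((I j).image w) ↔ i + 1 < j ∨ j + 1 < i) := fun hi hj =>
    (disjoint_image_iff_of_injOn (hwI hi hj)).trans (Nat.disjoint_Icc_mul_iff hs _ _)
  have hinj : Set.InjOn (fun i => (I i).image w) ↑(range p) := fun i hi j hj h =>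
    Nat.Icc_mul_injective hs ((image_eq_image_iff_of_injOn (hwI hi hj) subset_union_left
      subset_union_right).mp h)
  have hcard : #P.edges ≤ #P.verts := by
    rw [hedges, hn]
    refine card_image_le.trans ?_
    rw [card_range]
    nlinarith
  rw [matchPoly_eq_sum_matchings _ _ hcard, hn, hedges,
    sum_matchings_image _ _ hinj fun k => (-1) ^ k * x ^ (p * (r - 1) + 1 - r * k), loosePathPoly]
  refine sum_congr (filter_congr fun A hA => ?_) fun _ _ => rfl
  have hA := mem_powerset.mp hA
  rw [noConsecutive_iff_forall]
  exact forall₂_congr fun i hi => forall₂_congr fun j hj =>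
    imp_congr_right fun _ => hdisj (hA hi) (hA hj)

end FinHypergraph.IsLoosePath

/-- For `r ≥ 2` and `m ≥ 2`, the matching polynomials of `r`-uniform
loose paths satisfy `φ(P_m^r, x) = x^(r−1)·φ(P_{m−1}^r, x) − x^(r−2)·φ(P_{m−2}^r, x)`,
with `φ(P_0^r, x) = x` and `φ(P_1^r, x) = x^r − 1`. -/
theorem loosePath_matchPoly_recurrence {α : Type*} (r m : ℕ) (hr : 2 ≤ r) (hm : 2 ≤ m)
    (Pm Pm1 Pm2 P0 P1 : FinHypergraph α)
    (hPm : IsLoosePath r m Pm) (hPm1 : IsLoosePath r (m - 1) Pm1)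
    (hPm2 : IsLoosePath r (m - 2) Pm2)
    (hP0 : IsLoosePath r 0 P0) (hP1 : IsLoosePath r 1 P1) :
    (∀ x : ℝ, Pm.matchPoly r x
        = x ^ (r - 1) * Pm1.matchPoly r x - x ^ (r - 2) * Pm2.matchPoly r x) ∧
    (∀ x : ℝ, P0.matchPoly r x = x) ∧
    (∀ x : ℝ, P1.matchPoly r x = x ^ r - 1) := by
  refine ⟨fun x => ?_, fun x => ?_, fun x => ?_⟩
  · have h := loosePathPoly_add_two hr (m - 2) x
    rw [show m - 2 + 2 = m by omega, show m - 2 + 1 = m - 1 by omega] at h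
    rw [hPm.matchPoly_eq hr, hPm1.matchPoly_eq hr, hPm2.matchPoly_eq hr, h]
  · rw [hP0.matchPoly_eq hr, loosePathPoly_zero]
  · rw [hP1.matchPoly_eq hr, loosePathPoly_one (by omega)]
end
end

section
/- Let r ≥ 2, let T be an r-uniform supertree, let v be a vertex of T, and let p ≥ q ≥ 1 be integers. Then φ(T(v;p,q), x) − φ(T(v;p+1,q−1), x) = x^{q(r−2)} · ( φ(T(v;p−q,0), x) − φ((T−v) ∪ P_{p−q}^r, x) ), where (T−v) ∪ P_{p−q}^r denotes the disjoint union of T−v with a loose path of length p−q (a single isolated vertex when p = q). -/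
open Classical

noncomputable section

namespace FinHypergraph

variable {α : Type*}

/-- The disjoint union of two hypergraphs (on disjoint vertex sets). -/
def disjUnion (G H : FinHypergraph α) : FinHypergraph α :=
  ⟨G.verts ∪ H.verts, G.edges ∪ H.edges⟩

/-- `H` is connected: nonempty vertex set, and any two vertices are linked by a chain of
vertices successively lying in a common edge. -/
def Connected (H : FinHypergraph α) : Prop :=
  H.verts.Nonempty ∧ ∀ u ∈ H.verts, ∀ v ∈ H.verts,
    Relation.ReflTransGen (fun a b => ∃ e ∈ H.edges, a ∈ e ∧ b ∈ e) u v

/-- `H` has a cycle: an alternating sequence `v_0 e_0 v_1 e_1 … v_{ℓ-1} e_{ℓ-1} v_0`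
(with `ℓ ≥ 2`) of distinct vertices and distinct edges such that consecutive vertices lie
in the intermediate edge. -/
def HasCycle (H : FinHypergraph α) : Prop :=
  ∃ (ℓ : ℕ) (v : ℕ → α) (e : ℕ → Finset α), 2 ≤ ℓ ∧
    Set.InjOn v (Set.Iio ℓ) ∧ Set.InjOn e (Set.Iio ℓ) ∧
    ∀ i < ℓ, e i ∈ H.edges ∧ v i ∈ e i ∧ v ((i + 1) % ℓ) ∈ e i

/-- An `r`-uniform supertree: a connected acyclic `r`-uniform hypergraph. -/
def IsSupertree (H : FinHypergraph α) (r : ℕ) : Prop :=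
  H.WellFormed ∧ H.Uniform r ∧ H.Connected ∧ ¬ H.HasCycle

/-- `T'` is obtained from `T` by attaching a pendant path of length `p` at the vertex `v`:
a loose path of length `p`, all of whose vertices other than its first joint vertex are
new, is glued to `T` by identifying its first joint vertex with `v`. -/
def IsPendantPathAttach (r : ℕ) (T : FinHypergraph α) (v : α) (p : ℕ) (T' : FinHypergraph α) : Prop :=
  v ∈ T.verts ∧ ∃ w : ℕ → α, w 0 = v ∧
    Set.InjOn w (Set.Iic (p * (r - 1))) ∧
    (∀ j, 1 ≤ j → j ≤ p * (r - 1) → w j ∉ T.verts) ∧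
    T'.verts = T.verts ∪ (Finset.Icc 1 (p * (r - 1))).image w ∧
    T'.edges = T.edges ∪ loosePathEdges r p w

/-- `T'` is `T(v;p,q)`: obtained from `T` by attaching two pendant paths of lengths `p`
and `q` at the vertex `v`. -/
def IsTwoPathAttach (r : ℕ) (T : FinHypergraph α) (v : α) (p q : ℕ) (T' : FinHypergraph α) : Prop :=
  ∃ T1 : FinHypergraph α, IsPendantPathAttach r T v p T1 ∧ IsPendantPathAttach r T1 v q T'

end FinHypergraph

/-!
Write `d` for `pathSeq r x`. Attaching a pendant loose path of length `p` at `v` acts linearly on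
the pair `(φ(T), φ(T - v))`: `φ(T') = φ(T) d (p + 1) - φ(T - v) d p` and
`φ(T' - v) = φ(T - v) d (p + 1)`. Both follow by peeling the path off one edge at a time, using the
edge recurrence `φ(H) = φ(H \ e) - φ(H - V(e))` for the first edge `e`, whose other vertices are
isolated in `H \ e`. A loose path disjoint from `T - v` is a path attached at an extra isolated
vertex. So all four matching polynomials in the theorem are bilinear in `φ(T)` and `φ(T - v)`
with coefficients in the `d`'s, and the identity reduces to two Cassini-type identities for `d`.
-/

theorem Finset.card_sdiff_of_inter_eq_singleton {α : Type*} [DecidableEq α] {s t : Finset α}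
    {a : α} (h : s ∩ t = {a}) : (s \ t).card = s.card - 1 := by
  rw [Finset.card_sdiff, Finset.inter_comm, h, Finset.card_singleton]

/-- `pathSeq r x (m + 1)` is the matching polynomial of the loose path `P_m^r` with its first
vertex deleted. -/
noncomputable def pathSeq (r : ℕ) (x : ℝ) : ℕ → ℝ
  | 0 => 0
  | 1 => 1
  | m + 2 => x ^ (r - 1) * pathSeq r x (m + 1) - x ^ (r - 2) * pathSeq r x m

namespace pathSeq

variable {r : ℕ} {x : ℝ}

@[simp] theorem zero : pathSeq r x 0 = 0 := rfl

@[simp] theorem one : pathSeq r x 1 = 1 := rfl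

theorem add_two (m : ℕ) :
    pathSeq r x (m + 2) = x ^ (r - 1) * pathSeq r x (m + 1) - x ^ (r - 2) * pathSeq r x m := rfl

theorem cassini {a b : ℕ} (hba : b ≤ a) :
    pathSeq r x (a + 1) * pathSeq r x (b + 1) - pathSeq r x (a + 2) * pathSeq r x b =
      x ^ (b * (r - 2)) * pathSeq r x (a + 1 - b) := by
  induction b generalizing a with
  | zero => simp
  | succ b ih =>
    obtain ⟨a, rfl⟩ : ∃ a', a = a' + 1 := ⟨a - 1, by omega⟩
    rw [show a + 1 + 1 - (b + 1) = a + 1 - b by omega, add_one_mul, pow_add, add_two b,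
      add_two (a + 1)]
    linear_combination x ^ (r - 2) * ih (a := a) (by omega)

theorem cassini_two (hr : 2 ≤ r) {p q : ℕ} (hq : 1 ≤ q) (hqp : q ≤ p) :
    pathSeq r x p * pathSeq r x (q + 1) - pathSeq r x (p + 2) * pathSeq r x (q - 1) =
      x ^ (q * (r - 2) + 1) * pathSeq r x (p - q + 1) := by
  obtain ⟨q, rfl⟩ : ∃ q', q = q' + 1 := ⟨q - 1, by omega⟩
  obtain ⟨p, rfl⟩ : ∃ p', p = p' + 1 := ⟨p - 1, by omega⟩
  have hpow : x ^ ((q + 1) * (r - 2) + 1) = x ^ (r - 1) * x ^ (q * (r - 2)) := by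
    rw [← pow_add]
    congr 1
    rw [add_one_mul]
    omega
  rw [Nat.add_sub_cancel, show p + 1 - (q + 1) + 1 = p + 1 - q by omega, add_two q,
    add_two (p + 1), hpow]
  linear_combination x ^ (r - 1) * cassini (r := r) (x := x) (by omega : q ≤ p)

end pathSeq

namespace FinHypergraph

variable {α : Type*}

@[ext]
theorem ext {G H : FinHypergraph α} (hv : G.verts = H.verts) (he : G.edges = H.edges) :
    G = H := by
  cases G; cases H; simp_all

@[simps]
def addVerts (H : FinHypergraph α) (I : Finset α) : FinHypergraph α :=
  ⟨H.verts ∪ I, H.edges⟩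

@[simps]
def addEdge (H : FinHypergraph α) (e : Finset α) : FinHypergraph α :=
  ⟨H.verts ∪ e, insert e H.edges⟩

@[simp]
theorem removeVerts_verts (H : FinHypergraph α) (S : Finset α) :
    (H.removeVerts S).verts = H.verts \ S := rfl

@[simp]
theorem removeVerts_edges (H : FinHypergraph α) (S : Finset α) :
    (H.removeVerts S).edges = H.edges.filter (Disjoint · S) := rfl

section Basic

variable {H : FinHypergraph α} {r : ℕ} {S e : Finset α}

theorem WellFormed.removeVerts (hwf : H.WellFormed) (S : Finset α) :
    (H.removeVerts S).WellFormed := by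
  intro f hf a ha
  simp only [removeVerts_edges, Finset.mem_filter] at hf
  exact Finset.mem_sdiff.mpr ⟨hwf f hf.1 ha, Finset.disjoint_left.mp hf.2 ha⟩

theorem Uniform.removeVerts (hu : H.Uniform r) (S : Finset α) : (H.removeVerts S).Uniform r :=
  fun f hf => hu f (Finset.mem_filter.mp hf).1

theorem WellFormed.addVerts (hwf : H.WellFormed) (I : Finset α) : (H.addVerts I).WellFormed :=
  fun f hf => (hwf f hf).trans Finset.subset_union_left

theorem WellFormed.addEdge (hwf : H.WellFormed) (e : Finset α) : (H.addEdge e).WellFormed := by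
  intro f hf
  rcases Finset.mem_insert.mp hf with rfl | hf
  · exact Finset.subset_union_right
  · exact (hwf f hf).trans Finset.subset_union_left

theorem Uniform.addEdge (hu : H.Uniform r) (he : e.card = r) : (H.addEdge e).Uniform r := by
  intro f hf
  rcases Finset.mem_insert.mp hf with rfl | hf
  · exact he
  · exact hu f hf

theorem removeVerts_addVerts (H : FinHypergraph α) (I S : Finset α) :
    (H.addVerts I).removeVerts S = (H.removeVerts S).addVerts (I \ S) := by
  ext1
  · exact Finset.union_sdiff_distrib _ _ _
  · rfl

theorem removeVerts_addEdge (H : FinHypergraph α) (h : ¬ Disjoint e S) :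
    (H.addEdge e).removeVerts S = (H.removeVerts S).addVerts (e \ S) := by
  ext1
  · exact Finset.union_sdiff_distrib _ _ _
  · simp [FinHypergraph.removeVerts, addEdge, addVerts, Finset.filter_insert, h]

theorem removeVerts_eq_self (hwf : H.WellFormed) (h : Disjoint H.verts S) :
    H.removeVerts S = H := by
  ext1
  · exact Finset.sdiff_eq_self_of_disjoint h
  · exact Finset.filter_true_of_mem fun f hf => h.mono_left (hwf f hf)

theorem removeVerts_congr (hwf : H.WellFormed) {S' : Finset α}
    (h : S ∩ H.verts = S' ∩ H.verts) : H.removeVerts S = H.removeVerts S' := by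
  have hmem : ∀ a ∈ H.verts, a ∈ S ↔ a ∈ S' := fun a ha => by
    simpa [ha] using Finset.ext_iff.mp h a
  ext1
  · rw [removeVerts_verts, removeVerts_verts, ← Finset.sdiff_inter_self_right, h,
      Finset.sdiff_inter_self_right]
  · refine Finset.filter_congr fun f hf => ?_
    simp only [Finset.disjoint_left]
    exact forall₂_congr fun a ha => not_congr (hmem a (hwf f hf ha))

end Basic

def matchings (E : Finset (Finset α)) : Finset (Finset (Finset α)) :=
  E.powerset.filter IsMatchingSet

section Matchings

variable {H : FinHypergraph α} {r : ℕ} {E M N : Finset (Finset α)} {e : Finset α}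

theorem mem_matchings : M ∈ matchings E ↔ M ⊆ E ∧ IsMatchingSet M := by
  simp [matchings]

theorem IsMatchingSet.mono (hM : IsMatchingSet M) (hNM : N ⊆ M) : IsMatchingSet N :=
  fun e he f hf hef => hM e (hNM he) f (hNM hf) hef

theorem card_mul_le_card_verts_of_mem_matchings (hwf : H.WellFormed) (hu : H.Uniform r)
    (hM : M ∈ matchings H.edges) : r * M.card ≤ H.verts.card := by
  obtain ⟨hME, hmatch⟩ := mem_matchings.mp hM
  calc r * M.card = ∑ f ∈ M, f.card := by
        rw [Finset.sum_congr rfl fun f hf => hu f (hME hf), Finset.sum_const, smul_eq_mul,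
          mul_comm]
    _ = (M.biUnion id).card := (Finset.card_biUnion hmatch).symm
    _ ≤ H.verts.card := Finset.card_le_card <| Finset.biUnion_subset.mpr fun f hf => hwf f (hME hf)

theorem matchPoly_eq_sum_matchings_s10 (hr : 0 < r) (hwf : H.WellFormed) (hu : H.Uniform r)
    (x : ℝ) : H.matchPoly r x =
      ∑ M ∈ matchings H.edges, (-1 : ℝ) ^ M.card * x ^ (H.verts.card - r * M.card) := by
  have hmaps : ∀ M ∈ matchings H.edges, M.card ∈ Finset.range (H.verts.card + 1) := by
    intro M hM
    have := card_mul_le_card_verts_of_mem_matchings hwf hu hM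
    have := Nat.le_mul_of_pos_left M.card hr
    rw [Finset.mem_range]
    omega
  rw [← Finset.sum_fiberwise_of_maps_to hmaps]
  refine Finset.sum_congr rfl fun k _ => ?_
  have hfiber : (matchings H.edges).filter (fun M => M.card = k) =
      H.edges.powerset.filter (fun M => M.card = k ∧ IsMatchingSet M) := by
    rw [matchings, Finset.filter_filter]
    exact Finset.filter_congr fun M _ => and_comm
  rw [Finset.sum_congr rfl fun M hM => by rw [(Finset.mem_filter.mp hM).2], Finset.sum_const,
    hfiber, matchCount, nsmul_eq_mul]
  ring

theorem matchings_insert_filter_notMem (heE : e ∉ E) :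
    (matchings (insert e E)).filter (e ∉ ·) = matchings E := by
  ext M
  simp only [Finset.mem_filter, mem_matchings]
  constructor
  · rintro ⟨⟨hME, hmatch⟩, heM⟩
    exact ⟨(Finset.subset_insert_iff_of_notMem heM).mp hME, hmatch⟩
  · rintro ⟨hME, hmatch⟩
    exact ⟨⟨hME.trans (Finset.subset_insert e E), hmatch⟩, fun heM => heE (hME heM)⟩

theorem matchings_insert_filter_mem (e : Finset α) (E : Finset (Finset α)) :
    (matchings (insert e E)).filter (e ∈ ·) =
      (matchings (E.filter (Disjoint · e))).image (insert e) := by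
  ext M
  simp only [Finset.mem_filter, Finset.mem_image, mem_matchings]
  constructor
  · rintro ⟨⟨hME, hmatch⟩, heM⟩
    refine ⟨M.erase e, ⟨fun f hf => ?_, hmatch.mono (Finset.erase_subset e M)⟩,
      Finset.insert_erase heM⟩
    obtain ⟨hfe, hfM⟩ := Finset.mem_erase.mp hf
    exact Finset.mem_filter.mpr ⟨(Finset.mem_insert.mp (hME hfM)).resolve_left hfe,
      hmatch f hfM e heM hfe⟩
  · rintro ⟨N, ⟨hNE, hmatch⟩, rfl⟩
    have hdisj : ∀ f ∈ N, Disjoint f e := fun f hf => (Finset.mem_filter.mp (hNE hf)).2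
    refine ⟨⟨Finset.insert_subset_insert e (hNE.trans (Finset.filter_subset _ E)), ?_⟩,
      Finset.mem_insert_self e N⟩
    intro f hf g hg hfg
    rcases Finset.mem_insert.mp hf with rfl | hfN <;>
      rcases Finset.mem_insert.mp hg with rfl | hgN
    · exact absurd rfl hfg
    · exact (hdisj g hgN).symm
    · exact hdisj f hfN
    · exact hmatch f hfN g hgN hfg

theorem matchPoly_addVerts (hr : 0 < r) (hwf : H.WellFormed) (hu : H.Uniform r) (I : Finset α)
    (x : ℝ) : (H.addVerts I).matchPoly r x = x ^ (I \ H.verts).card * H.matchPoly r x := by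
  have hcard : (H.verts ∪ I).card = (I \ H.verts).card + H.verts.card := by
    rw [Finset.union_comm, Finset.card_sdiff_add_card]
  rw [matchPoly_eq_sum_matchings_s10 hr (hwf.addVerts I) hu, matchPoly_eq_sum_matchings_s10 hr hwf hu,
    Finset.mul_sum]
  refine Finset.sum_congr rfl fun M hM => ?_
  have hM := card_mul_le_card_verts_of_mem_matchings hwf hu hM
  rw [addVerts_verts, hcard, Nat.add_sub_assoc hM, pow_add]
  ring

/-- The edge recurrence `φ(H) = φ(H \ e) - φ(H - V(e))`, stated for the hypergraph `H + e`. -/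
theorem matchPoly_addEdge (hr : 0 < r) (hwf : H.WellFormed) (hu : H.Uniform r)
    (he : e.card = r) (heH : e ∉ H.edges) (x : ℝ) :
    (H.addEdge e).matchPoly r x =
      (H.addVerts e).matchPoly r x - (H.removeVerts e).matchPoly r x := by
  have hcard : (H.verts ∪ e).card = (H.verts \ e).card + r := by
    rw [← he, Finset.card_sdiff_add_card]
  have heN : ∀ N ∈ matchings (H.removeVerts e).edges, e ∉ N := fun N hN heN =>
    heH (Finset.filter_subset _ _ ((mem_matchings.mp hN).1 heN))
  rw [matchPoly_eq_sum_matchings_s10 hr (hwf.addEdge e) (hu.addEdge he),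
    matchPoly_eq_sum_matchings_s10 hr (hwf.addVerts e) hu,
    matchPoly_eq_sum_matchings_s10 hr (hwf.removeVerts e) (hu.removeVerts e),
    ← Finset.sum_filter_not_add_sum_filter _ (e ∈ ·)]
  simp only [addEdge_edges, addEdge_verts, addVerts_edges, addVerts_verts, removeVerts_edges,
    removeVerts_verts] at heN ⊢
  rw [matchings_insert_filter_notMem heH, matchings_insert_filter_mem,
    Finset.sum_image fun N hN N' hN' h => by
      rw [← Finset.erase_insert (heN N hN), h, Finset.erase_insert (heN N' hN')], sub_eq_add_neg,
    ← Finset.sum_neg_distrib]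
  congr 1
  refine Finset.sum_congr rfl fun N hN => ?_
  rw [Finset.card_insert_of_notMem (heN N hN), hcard, mul_add_one,
    Nat.add_sub_add_right]
  ring

end Matchings

section PendantEdge

variable {H : FinHypergraph α} {r : ℕ} {e : Finset α} {u v : α}

theorem matchPoly_addEdge_of_inter_eq_singleton (hr : 2 ≤ r) (hwf : H.WellFormed)
    (hu : H.Uniform r) (he : e.card = r) (hev : e ∩ H.verts = {v}) (x : ℝ) :
    (H.addEdge e).matchPoly r x =
      x ^ (r - 1) * H.matchPoly r x - (H.removeVerts {v}).matchPoly r x := by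
  have hvV : v ∈ H.verts := (Finset.mem_inter.mp (hev ▸ Finset.mem_singleton_self v)).2
  have heH : e ∉ H.edges := fun heH => by
    have := congrArg Finset.card (Finset.inter_eq_left.mpr (hwf e heH))
    rw [hev, he, Finset.card_singleton] at this
    omega
  rw [matchPoly_addEdge (by omega) hwf hu he heH, matchPoly_addVerts (by omega) hwf hu,
    Finset.card_sdiff_of_inter_eq_singleton hev, he,
    removeVerts_congr hwf (S' := {v}) (by rw [hev, Finset.singleton_inter_of_mem hvV])]

theorem matchPoly_removeVerts_addEdge_of_ne (hr : 0 < r) (hwf : H.WellFormed)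
    (hu : H.Uniform r) (he : e.card = r) (hev : e ∩ H.verts = {v}) (hue : u ∈ e) (huv : u ≠ v)
    (x : ℝ) : ((H.addEdge e).removeVerts {u}).matchPoly r x = x ^ (r - 2) * H.matchPoly r x := by
  have huV : u ∉ H.verts := fun huV =>
    huv (Finset.mem_singleton.mp (hev ▸ Finset.mem_inter.mpr ⟨hue, huV⟩))
  have hnew : (e \ {u}) \ H.verts = (e \ H.verts).erase u := by
    ext a; simp only [Finset.mem_sdiff, Finset.mem_erase, Finset.mem_singleton]; tauto
  rw [removeVerts_addEdge H (Finset.not_disjoint_iff.mpr ⟨u, hue, Finset.mem_singleton_self u⟩),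
    removeVerts_eq_self hwf (Finset.disjoint_singleton_right.mpr huV),
    matchPoly_addVerts hr hwf hu, hnew,
    Finset.card_erase_of_mem (Finset.mem_sdiff.mpr ⟨hue, huV⟩),
    Finset.card_sdiff_of_inter_eq_singleton hev, he, Nat.sub_sub]

theorem matchPoly_removeVerts_addEdge_of_inter_eq_singleton (hr : 0 < r) (hwf : H.WellFormed)
    (hu : H.Uniform r) (he : e.card = r) (hev : e ∩ H.verts = {v}) (x : ℝ) :
    ((H.addEdge e).removeVerts {v}).matchPoly r x =
      x ^ (r - 1) * (H.removeVerts {v}).matchPoly r x := by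
  have hve : v ∈ e := (Finset.mem_inter.mp (hev ▸ Finset.mem_singleton_self v)).1
  have hnew : (e \ {v}) \ (H.verts \ {v}) = e \ H.verts := by
    have := Finset.ext_iff.mp hev
    ext a
    simp only [Finset.mem_sdiff, Finset.mem_inter, Finset.mem_singleton] at this ⊢
    grind
  rw [removeVerts_addEdge H (Finset.not_disjoint_iff.mpr ⟨v, hve, Finset.mem_singleton_self v⟩),
    matchPoly_addVerts hr (hwf.removeVerts _) (hu.removeVerts _), removeVerts_verts, hnew,
    Finset.card_sdiff_of_inter_eq_singleton hev, he]

theorem matchPoly_removeVerts_removeVerts_addEdge_of_ne (hr : 0 < r) (hwf : H.WellFormed)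
    (hu : H.Uniform r) (he : e.card = r) (hev : e ∩ H.verts = {v}) (hue : u ∈ e) (huv : u ≠ v)
    (x : ℝ) : (((H.addEdge e).removeVerts {v}).removeVerts {u}).matchPoly r x =
      x ^ (r - 2) * (H.removeVerts {v}).matchPoly r x := by
  have hve : v ∈ e := (Finset.mem_inter.mp (hev ▸ Finset.mem_singleton_self v)).1
  have huV : u ∉ H.verts := fun huV =>
    huv (Finset.mem_singleton.mp (hev ▸ Finset.mem_inter.mpr ⟨hue, huV⟩))
  have hnew : ((e \ {v}) \ {u}) \ (H.verts \ {v}) = (e \ H.verts).erase u := by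
    have := Finset.ext_iff.mp hev
    ext a
    simp only [Finset.mem_sdiff, Finset.mem_inter, Finset.mem_singleton,
      Finset.mem_erase] at this ⊢
    grind
  rw [removeVerts_addEdge H (Finset.not_disjoint_iff.mpr ⟨v, hve, Finset.mem_singleton_self v⟩),
    removeVerts_addVerts, removeVerts_eq_self (hwf.removeVerts _)
      (Finset.disjoint_singleton_right.mpr fun h => huV (Finset.mem_sdiff.mp h).1),
    matchPoly_addVerts hr (hwf.removeVerts _) (hu.removeVerts _), removeVerts_verts, hnew,
    Finset.card_erase_of_mem (Finset.mem_sdiff.mpr ⟨hue, huV⟩),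
    Finset.card_sdiff_of_inter_eq_singleton hev, he, Nat.sub_sub]

end PendantEdge

section PendantPath

variable {r p : ℕ} {w : ℕ → α} {T T' : FinHypergraph α} {u v : α}

theorem image_Icc_comp_add_right (w : ℕ → α) (a b c : ℕ) :
    (Finset.Icc a b).image (fun j => w (j + c)) = (Finset.Icc (a + c) (b + c)).image w := by
  rw [← Finset.image_add_right_Icc, Finset.image_image]
  rfl

@[simp]
theorem loosePathEdges_zero (r : ℕ) (w : ℕ → α) : loosePathEdges r 0 w = ∅ := by
  simp [loosePathEdges]

theorem loosePathEdges_succ (r p : ℕ) (w : ℕ → α) :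
    loosePathEdges r (p + 1) w = insert ((Finset.Icc 0 (r - 1)).image w)
      (loosePathEdges r p fun j => w (j + (r - 1))) := by
  rw [loosePathEdges, Finset.range_add_one', Finset.image_insert, Finset.map_eq_image,
    Finset.image_image, loosePathEdges]
  congr 1
  · simp
  · refine Finset.image_congr fun i _ => ?_
    change (Finset.Icc ((i + 1) * (r - 1)) ((i + 1 + 1) * (r - 1))).image w = _
    rw [image_Icc_comp_add_right]
    congr 2 <;> ring

theorem subset_of_mem_loosePathEdges {f : Finset α} (hf : f ∈ loosePathEdges r p w) :
    f ⊆ (Finset.Icc 0 (p * (r - 1))).image w := by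
  obtain ⟨i, hi, rfl⟩ := Finset.mem_image.mp hf
  refine Finset.image_subset_image fun j hj => ?_
  simp only [Finset.mem_Icc, Finset.mem_range] at hi hj ⊢
  exact ⟨Nat.zero_le j, hj.2.trans (Nat.mul_le_mul_right _ hi)⟩

theorem image_Icc_zero_eq_insert (w : ℕ → α) (n : ℕ) :
    (Finset.Icc 0 n).image w = insert (w 0) ((Finset.Icc 1 n).image w) := by
  rw [← Finset.insert_Icc_add_one_left_eq_Icc (Nat.zero_le n), Finset.image_insert, zero_add]

theorem IsPendantPathAttach.eq_of_zero (h : IsPendantPathAttach r T v 0 T') : T' = T := by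
  obtain ⟨-, w, -, -, -, hverts, hedges⟩ := h
  ext1
  · simp [hverts]
  · simp [hedges]

theorem IsPendantPathAttach.succ (hr : 2 ≤ r) (h : IsPendantPathAttach r T v (p + 1) T') :
    ∃ e u, e.card = r ∧ e ∩ T.verts = {v} ∧ u ∈ e ∧ u ≠ v ∧
      IsPendantPathAttach r (T.addEdge e) u p T' := by
  obtain ⟨hvT, w, hw0, hinj, hnew, hverts, hedges⟩ := h
  have hr1 : 1 ≤ r - 1 := by omega
  have hpc : (p + 1) * (r - 1) = p * (r - 1) + (r - 1) := add_one_mul p (r - 1)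
  have hinj' : ∀ {i j}, i ≤ (p + 1) * (r - 1) → j ≤ (p + 1) * (r - 1) → w i = w j → i = j :=
    fun hi hj hij => hinj (Set.mem_Iic.mpr hi) (Set.mem_Iic.mpr hj) hij
  refine ⟨(Finset.Icc 0 (r - 1)).image w, w (r - 1), ?_, ?_, Finset.mem_image_of_mem w (by simp),
    fun h => hnew _ hr1 (by omega) (h ▸ hvT),
    Finset.mem_union_right _ (Finset.mem_image_of_mem w (by simp)),
    fun j => w (j + (r - 1)), by simp, ?_, ?_, ?_, ?_⟩
  · rw [Finset.card_image_of_injOn fun i hi j hj hij => hinj' (by simp at hi; omega)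
      (by simp at hj; omega) hij, Nat.card_Icc]
    omega
  · ext a
    simp only [Finset.mem_inter, Finset.mem_image, Finset.mem_Icc, Finset.mem_singleton]
    constructor
    · rintro ⟨⟨j, hj, rfl⟩, haT⟩
      by_contra hne
      exact hnew j (Nat.pos_of_ne_zero fun h0 => hne (h0 ▸ hw0)) (by omega) haT
    · rintro rfl
      exact ⟨⟨0, by omega, hw0⟩, hvT⟩
  · intro i hi j hj hij
    simp only [Set.mem_Iic] at hi hj
    have := hinj' (by omega) (by omega) hij
    omega
  · intro j hj1 hjp
    simp only [addEdge_verts, Finset.mem_union, Finset.mem_image, Finset.mem_Icc, not_or]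
    refine ⟨hnew _ (by omega) (by omega), ?_⟩
    rintro ⟨i, hi, hij⟩
    have := hinj' (by omega) (by omega) hij
    omega
  · rw [hverts, addEdge_verts, image_Icc_comp_add_right, image_Icc_zero_eq_insert, hw0,
      Finset.union_insert, Finset.insert_eq_of_mem (Finset.mem_union_left _ hvT),
      Finset.union_assoc, ← Finset.image_union]
    congr 2
    ext j
    simp only [Finset.mem_Icc, Finset.mem_union]
    omega
  · rw [hedges, loosePathEdges_succ, Finset.union_insert, addEdge_edges, Finset.insert_union]

theorem IsPendantPathAttach.removeVerts (h : IsPendantPathAttach r T u p T')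
    (hv : v ∈ T.verts) (hvu : v ≠ u) :
    IsPendantPathAttach r (T.removeVerts {v}) u p (T'.removeVerts {v}) := by
  obtain ⟨huT, w, hw0, hinj, hnew, hverts, hedges⟩ := h
  have hv_path : v ∉ (Finset.Icc 0 (p * (r - 1))).image w := by
    rw [image_Icc_zero_eq_insert, Finset.mem_insert, hw0, not_or]
    refine ⟨hvu, fun hvw => ?_⟩
    obtain ⟨j, hj, rfl⟩ := Finset.mem_image.mp hvw
    exact hnew j (Finset.mem_Icc.mp hj).1 (Finset.mem_Icc.mp hj).2 hv
  refine ⟨Finset.mem_sdiff.mpr ⟨huT, by simpa using hvu.symm⟩, w, hw0, hinj,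
    fun j h1 h2 hj => hnew j h1 h2 (Finset.mem_sdiff.mp hj).1, ?_, ?_⟩
  · rw [image_Icc_zero_eq_insert, Finset.mem_insert, not_or] at hv_path
    rw [removeVerts_verts, removeVerts_verts, hverts, Finset.union_sdiff_distrib,
      Finset.sdiff_eq_self_of_disjoint (Finset.disjoint_singleton_right.mpr hv_path.2)]
  · rw [removeVerts_edges, removeVerts_edges, hedges, Finset.filter_union,
      Finset.filter_true_of_mem fun f hf => Finset.disjoint_singleton_right.mpr
        fun hvf => hv_path (subset_of_mem_loosePathEdges hf hvf)]

theorem IsPendantPathAttach.wellFormed (hr : 2 ≤ r) (h : IsPendantPathAttach r T v p T')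
    (hwf : T.WellFormed) : T'.WellFormed := by
  induction p generalizing T v with
  | zero => exact h.eq_of_zero ▸ hwf
  | succ p ih =>
    obtain ⟨e, u, -, -, -, -, h'⟩ := h.succ hr
    exact ih h' (hwf.addEdge e)

theorem IsPendantPathAttach.uniform (hr : 2 ≤ r) (h : IsPendantPathAttach r T v p T')
    (hu : T.Uniform r) : T'.Uniform r := by
  induction p generalizing T v with
  | zero => exact h.eq_of_zero ▸ hu
  | succ p ih =>
    obtain ⟨e, u, he, -, -, -, h'⟩ := h.succ hr
    exact ih h' (hu.addEdge he)

theorem IsLoosePath.isPendantPathAttach_disjUnion {m : ℕ} {P : FinHypergraph α}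
    (hP : IsLoosePath r m P) (G : FinHypergraph α) (hd : Disjoint P.verts G.verts) :
    ∃ u ∉ G.verts, IsPendantPathAttach r (G.addVerts {u}) u m (G.disjUnion P) := by
  obtain ⟨w, hinj, hverts, hedges⟩ := hP
  have hwP : ∀ {j}, j ≤ m * (r - 1) → w j ∈ P.verts := fun hj =>
    hverts ▸ Finset.mem_image_of_mem w (Finset.mem_Icc.mpr ⟨Nat.zero_le _, hj⟩)
  refine ⟨w 0, Finset.disjoint_left.mp hd (hwP (Nat.zero_le _)), by simp, w, rfl, hinj,
    fun j h1 h2 hj => ?_, ?_, ?_⟩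
  · rcases Finset.mem_union.mp hj with hjG | hj0
    · exact Finset.disjoint_left.mp hd (hwP h2) hjG
    · have := hinj (Set.mem_Iic.mpr h2) (Set.mem_Iic.mpr (Nat.zero_le _))
        (Finset.mem_singleton.mp hj0)
      omega
  · rw [disjUnion, addVerts_verts, hverts, image_Icc_zero_eq_insert, Finset.union_assoc,
      Finset.singleton_union]
  · rw [disjUnion, addVerts_edges, hedges]

theorem matchPoly_of_isPendantPathAttach (hr : 2 ≤ r) (hwf : T.WellFormed) (hu : T.Uniform r)
    (h : IsPendantPathAttach r T v p T') (x : ℝ) :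
    T'.matchPoly r x = T.matchPoly r x * pathSeq r x (p + 1) -
      (T.removeVerts {v}).matchPoly r x * pathSeq r x p := by
  induction p generalizing T v with
  | zero => simp [h.eq_of_zero]
  | succ p ih =>
    obtain ⟨e, u, he, hev, hue, huv, h'⟩ := h.succ hr
    rw [ih (hwf.addEdge e) (hu.addEdge he) h',
      matchPoly_addEdge_of_inter_eq_singleton hr hwf hu he hev,
      matchPoly_removeVerts_addEdge_of_ne (by omega) hwf hu he hev hue huv, pathSeq.add_two]
    ring

theorem matchPoly_removeVerts_of_isPendantPathAttach (hr : 2 ≤ r) (hwf : T.WellFormed)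
    (hu : T.Uniform r) (h : IsPendantPathAttach r T v p T') (x : ℝ) :
    (T'.removeVerts {v}).matchPoly r x =
      (T.removeVerts {v}).matchPoly r x * pathSeq r x (p + 1) := by
  cases p with
  | zero => simp [h.eq_of_zero]
  | succ p =>
    obtain ⟨e, u, he, hev, hue, huv, h'⟩ := h.succ hr
    have hvS : v ∈ (T.addEdge e).verts :=
      Finset.mem_union_right _ (Finset.mem_inter.mp (hev ▸ Finset.mem_singleton_self v)).1
    rw [matchPoly_of_isPendantPathAttach hr ((hwf.addEdge e).removeVerts _)
        ((hu.addEdge he).removeVerts _) (h'.removeVerts hvS huv.symm),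
      matchPoly_removeVerts_addEdge_of_inter_eq_singleton (by omega) hwf hu he hev,
      matchPoly_removeVerts_removeVerts_addEdge_of_ne (by omega) hwf hu he hev hue huv,
      pathSeq.add_two]
    ring

theorem matchPoly_of_isTwoPathAttach {q : ℕ} (hr : 2 ≤ r) (hwf : T.WellFormed)
    (hu : T.Uniform r) (h : IsTwoPathAttach r T v p q T') (x : ℝ) :
    T'.matchPoly r x =
      (T.matchPoly r x * pathSeq r x (p + 1) - (T.removeVerts {v}).matchPoly r x * pathSeq r x p) *
        pathSeq r x (q + 1) -
      (T.removeVerts {v}).matchPoly r x * pathSeq r x (p + 1) * pathSeq r x q := by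
  obtain ⟨T₁, h₁, h₂⟩ := h
  rw [matchPoly_of_isPendantPathAttach hr (h₁.wellFormed hr hwf) (h₁.uniform hr hu) h₂,
    matchPoly_of_isPendantPathAttach hr hwf hu h₁,
    matchPoly_removeVerts_of_isPendantPathAttach hr hwf hu h₁]

theorem matchPoly_disjUnion_of_isLoosePath {m : ℕ} {G P : FinHypergraph α} (hr : 2 ≤ r)
    (hwf : G.WellFormed) (hu : G.Uniform r) (hP : IsLoosePath r m P)
    (hd : Disjoint P.verts G.verts) (x : ℝ) :
    (G.disjUnion P).matchPoly r x =
      G.matchPoly r x * (x * pathSeq r x (m + 1) - pathSeq r x m) := by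
  obtain ⟨u, huG, h⟩ := hP.isPendantPathAttach_disjUnion G hd
  rw [matchPoly_of_isPendantPathAttach hr (hwf.addVerts _) hu h, removeVerts_addVerts,
    removeVerts_eq_self hwf (Finset.disjoint_singleton_right.mpr huG), Finset.sdiff_self,
    matchPoly_addVerts (by omega) hwf hu, matchPoly_addVerts (by omega) hwf hu,
    Finset.sdiff_eq_self_of_disjoint (Finset.disjoint_singleton_left.mpr huG)]
  simp only [Finset.card_singleton, pow_one, Finset.empty_sdiff, Finset.card_empty, pow_zero,
    one_mul]
  ring

end PendantPath

end FinHypergraph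

open FinHypergraph

theorem matchPoly_graft_one_vertex_general {α : Type*} (r : ℕ) (hr : 2 ≤ r)
    (T : FinHypergraph α) (hT : T.IsSupertree r) (v : α)
    (p q : ℕ) (hq1 : 1 ≤ q) (hqp : q ≤ p)
    (A B C P : FinHypergraph α)
    (hA : IsTwoPathAttach r T v p q A)
    (hB : IsTwoPathAttach r T v (p + 1) (q - 1) B)
    (hC : IsTwoPathAttach r T v (p - q) 0 C)
    (hP : IsLoosePath r (p - q) P)
    (hdisj : Disjoint P.verts (T.removeVerts {v}).verts) :
    ∀ x : ℝ, A.matchPoly r x - B.matchPoly r x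
      = x ^ (q * (r - 2)) *
          (C.matchPoly r x - ((T.removeVerts {v}).disjUnion P).matchPoly r x) := by
  intro x
  obtain ⟨hwf, hu, -, -⟩ := hT
  have hcassini := pathSeq.cassini (r := r) (x := x) hqp
  rw [show p + 1 - q = p - q + 1 by omega] at hcassini
  rw [matchPoly_of_isTwoPathAttach hr hwf hu hA, matchPoly_of_isTwoPathAttach hr hwf hu hB,
    matchPoly_of_isTwoPathAttach hr hwf hu hC,
    matchPoly_disjUnion_of_isLoosePath hr (hwf.removeVerts _) (hu.removeVerts _) hP hdisj,
    Nat.sub_add_cancel hq1, pathSeq.one, pathSeq.zero]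
  linear_combination T.matchPoly r x * hcassini -
    (T.removeVerts {v}).matchPoly r x * pathSeq.cassini_two hr hq1 hqp

/-- For an `r`-uniform supertree `T` (`r ≥ 2`), a vertex `v` of `T` and
integers `p ≥ q ≥ 1`,
`φ(T(v;p,q), x) − φ(T(v;p+1,q−1), x)
  = x^(q(r−2)) · ( φ(T(v;p−q,0), x) − φ((T−v) ∪ P_{p−q}^r, x) )`. -/
theorem matchPoly_graft_one_vertex {α : Type*} (r : ℕ) (hr : 2 ≤ r)
    (T : FinHypergraph α) (hT : T.IsSupertree r) (v : α) (hv : v ∈ T.verts)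
    (p q : ℕ) (hq1 : 1 ≤ q) (hqp : q ≤ p)
    (A B C P : FinHypergraph α)
    (hA : IsTwoPathAttach r T v p q A)
    (hB : IsTwoPathAttach r T v (p + 1) (q - 1) B)
    (hC : IsTwoPathAttach r T v (p - q) 0 C)
    (hP : IsLoosePath r (p - q) P)
    (hdisj : Disjoint P.verts (T.removeVerts {v}).verts) :
    ∀ x : ℝ, A.matchPoly r x - B.matchPoly r x
      = x ^ (q * (r - 2)) *
          (C.matchPoly r x - ((T.removeVerts {v}).disjUnion P).matchPoly r x) :=
  matchPoly_graft_one_vertex_general r hr T hT v p q hq1 hqp A B C P hA hB hC hP hdisj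
end
end
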